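/- arXiv:1310.3248 — 6 statements merged into one kernel-verified Lean document; each statement's English description precedes it below -/
import Mathlib

section
/- For every l with 1 ≤ l ≤ L, the l-th smallest value of the final vector equals the (M+l)-th smallest element of U; that is, v'_l = u'_{M+l} for all l = 1,…,L. (In particular, the retained final values are exactly the L largest elements of U.) -/
/-!
Invariant: after `m` steps the multiset of all values seen so far splits as `R + S`, where `S`
holds the current entries and every element of the discarded part `R` lies below every element
of `S`. Replacing a minimum `s` of `S` by `max s x` moves `min s x` into `R`, which keeps the
invariant. At the end `R` has `M` elements, and sorting `R + S` gives `sort R ++ sort S`.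
-/

namespace Multiset

variable {α : Type*} [LinearOrder α]

def IsTopSubmultiset (S T : Multiset α) : Prop :=
  ∃ R : Multiset α, R + S = T ∧ ∀ x ∈ R, ∀ y ∈ S, x ≤ y

theorem IsTopSubmultiset.refl (S : Multiset α) : IsTopSubmultiset S S :=
  ⟨0, zero_add S, by simp⟩

theorem sort_add_of_forall_le {R S : Multiset α} (h : ∀ x ∈ R, ∀ y ∈ S, x ≤ y) :
    (R + S).sort (· ≤ ·) = R.sort (· ≤ ·) ++ S.sort (· ≤ ·) := by
  refine List.Perm.eq_of_pairwise' (r := (· ≤ ·)) (pairwise_sort _ _) ?_ ?_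
  · exact List.pairwise_append.2 ⟨pairwise_sort _ _, pairwise_sort _ _,
      fun x hx y hy => h x ((mem_sort _).1 hx) y ((mem_sort _).1 hy)⟩
  · rw [← coe_eq_coe, ← coe_add, sort_eq, sort_eq, sort_eq]

theorem IsTopSubmultiset.getD_sort {S T : Multiset α} (h : IsTopSubmultiset S T)
    (l : ℕ) (d : α) :
    (S.sort (· ≤ ·)).getD l d = (T.sort (· ≤ ·)).getD (card T - card S + l) d := by
  obtain ⟨R, rfl, hRS⟩ := h
  rw [sort_add_of_forall_le hRS, card_add, Nat.add_sub_cancel,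
    List.getD_append_right _ _ _ _ (by simp), length_sort, Nat.add_sub_cancel_left]

theorem IsTopSubmultiset.cons_max {S T : Multiset α} (h : IsTopSubmultiset S T) {m : α}
    (hm : m ∈ S) (hmin : ∀ y ∈ S, m ≤ y) (x : α) :
    IsTopSubmultiset (max m x ::ₘ S.erase m) (x ::ₘ T) := by
  obtain ⟨R, rfl, hRS⟩ := h
  rcases le_total x m with hxm | hmx
  · refine ⟨x ::ₘ R, ?_, ?_⟩
    · rw [max_eq_left hxm, cons_erase hm, cons_add]
    · rw [max_eq_left hxm, cons_erase hm]
      simp only [mem_cons, forall_eq_or_imp]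
      exact ⟨fun y hy => hxm.trans (hmin y hy), hRS⟩
  · refine ⟨m ::ₘ R, ?_, ?_⟩
    · conv_rhs => rw [← cons_erase hm]
      rw [max_eq_right hmx, cons_add, add_cons, add_cons, cons_swap]
    · rw [max_eq_right hmx]
      intro y hy z hz
      have hmz : m ≤ z := (mem_cons.1 hz).elim (· ▸ hmx) (hmin z <| mem_of_mem_erase ·)
      rcases mem_cons.1 hy with rfl | hyR
      exacts [hmz, (hRS y hyR m hm).trans hmz]

end Multiset

theorem Finset.univ_val_map_update {ι β : Type*} [Fintype ι] [DecidableEq ι] [DecidableEq β]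
    (f : ι → β) (i : ι) (x : β) :
    univ.val.map (Function.update f i x) = x ::ₘ (univ.val.map f).erase (f i) := by
  have hi : i ∈ (univ : Finset ι).val := mem_univ i
  conv_lhs => rw [← Multiset.cons_erase hi]
  rw [Multiset.map_cons, Function.update_self, ← Multiset.map_erase_of_mem f _ hi]
  refine congrArg _ (Multiset.map_congr rfl fun j hj => Function.update_of_ne ?_ _ _)
  exact ((Multiset.Nodup.mem_erase_iff univ.nodup).1 hj).1

open Multiset in
theorem isTopSubmultiset_of_selectiveCombining {ι α : Type*} [Fintype ι] [DecidableEq ι]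
    [LinearOrder α] (v : ℕ → ι → α) (θ : ℕ → ι) (c : ℕ → α) (n : ℕ)
    (hmin : ∀ m < n, ∀ i, v m (θ m) ≤ v m i)
    (hstep : ∀ m < n, v (m + 1) = Function.update (v m) (θ m) (max (v m (θ m)) (c m))) :
    IsTopSubmultiset (Finset.univ.val.map (v n))
      (Finset.univ.val.map (v 0) + (range n).map c) := by
  induction n with
  | zero => simpa using IsTopSubmultiset.refl _
  | succ n ih =>
    have htop := ih (fun m hm => hmin m (Nat.lt_succ_of_lt hm))
      (fun m hm => hstep m (Nat.lt_succ_of_lt hm))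
    rw [hstep n n.lt_succ_self, Finset.univ_val_map_update, range_succ, map_cons, add_cons]
    exact htop.cons_max (mem_map_of_mem _ (Finset.mem_univ _))
      (by simpa using hmin n n.lt_succ_self) (c n)

theorem retained_values_are_top_order_statistics_general
    (L M : ℕ)
    (a : Fin L → ℝ) (b : Fin M → ℝ)
    (v : ℕ → Fin L → ℝ) (θ : ℕ → Fin L)
    (hv0 : v 0 = a)
    (hmin : ∀ m : Fin M, ∀ l : Fin L, v m (θ m) ≤ v m l)
    (hupd : ∀ m : Fin M, v ((m : ℕ) + 1) (θ m) = max (v m (θ m)) (b m))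
    (hoth : ∀ m : Fin M, ∀ l : Fin L, l ≠ θ m → v ((m : ℕ) + 1) l = v m l) :
    ∀ l : Fin L,
      ((Multiset.ofList (List.ofFn (v M))).sort (· ≤ ·)).getD l 0 =
        ((Multiset.ofList (List.ofFn a ++ List.ofFn b)).sort (· ≤ ·)).getD
          (M + l) 0 := by
  intro l
  set c : ℕ → ℝ := fun m => if h : m < M then b ⟨m, h⟩ else 0
  have hstep : ∀ m < M, v (m + 1) = Function.update (v m) (θ m) (max (v m (θ m)) (c m)) := by
    intro m hm
    funext i
    rcases eq_or_ne i (θ m) with rfl | hi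
    · simpa [c, hm] using hupd ⟨m, hm⟩
    · simpa [hi] using hoth ⟨m, hm⟩ i hi
  have hc : (Multiset.range M).map c = Finset.univ.val.map b := by
    rw [Fin.univ_val_map, Multiset.range, Multiset.map_coe, ← List.map_coe_finRange_eq_range,
      List.map_map, List.ofFn_eq_map]
    exact congrArg _ (List.map_congr_left fun i _ => by simp [c])
  have htop := isTopSubmultiset_of_selectiveCombining v θ c M (fun m hm => hmin ⟨m, hm⟩) hstep
  rw [hv0, hc, Fin.univ_val_map, Fin.univ_val_map, Fin.univ_val_map, Multiset.coe_add] at htop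
  rw [htop.getD_sort]
  simp

/-- **Lemma 1 (deterministic core).**
Selective-combining process: `v 0 = a`; at step `m` the minimum slot `θ m`
is updated to `max (v m (θ m)) (b m)`, the others are unchanged.  If the
`L + M` values `a_1,…,a_L, b_1,…,b_M` are pairwise distinct, then for every
`l`, the `l`-th smallest entry of the final vector `v M` equals the
`(M+l)`-th smallest element of the multiset `U = {a_1,…,a_L,b_1,…,b_M}`. -/
theorem retained_values_are_top_order_statistics
    (L M : ℕ) (hL : 0 < L) (hM : 0 < M)
    (a : Fin L → ℝ) (b : Fin M → ℝ)
    (hdist : Function.Injective (Sum.elim a b))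
    (v : ℕ → Fin L → ℝ) (θ : ℕ → Fin L)
    (hv0 : v 0 = a)
    (hmin : ∀ m : Fin M, ∀ l : Fin L, v m (θ m) ≤ v m l)
    (hupd : ∀ m : Fin M, v ((m : ℕ) + 1) (θ m) = max (v m (θ m)) (b m))
    (hoth : ∀ m : Fin M, ∀ l : Fin L, l ≠ θ m → v ((m : ℕ) + 1) l = v m l) :
    ∀ l : Fin L,
      ((Multiset.ofList (List.ofFn (v M))).sort (· ≤ ·)).getD l 0 =
        ((Multiset.ofList (List.ofFn a ++ List.ofFn b)).sort (· ≤ ·)).getD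
          (M + l) 0 :=
  retained_values_are_top_order_statistics_general L M a b v θ hv0 hmin hupd hoth
end

section
/- The multiset of final values {v^(M+1)(1),…,v^(M+1)(L)} is a sub-multiset of U of cardinality L; equivalently, every final value equals either its initial value a_l or one of the update values b_m, and distinct slots carry distinct elements of U. -/
/-! Each step rewrites a single slot, either keeping its value or replacing it by `b m`, so the
multiset of current values grows by at most `b m` per step; after `M` steps it therefore lies
below `{a_1,…,a_L} + {b_1,…,b_M}`. -/

open Finset

theorem Fin.univ_val_map_castSucc {α : Type*} {n : ℕ} (b : Fin (n + 1) → α) :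
    univ.val.map b = b (Fin.last n) ::ₘ univ.val.map (fun i : Fin n => b i.castSucc) := by
  rw [Fin.univ_val_map, Fin.univ_val_map, List.ofFn_succ', List.concat_eq_append,
    Multiset.cons_coe]
  exact Multiset.coe_eq_coe.2 (List.perm_append_singleton _ _)

variable {ι α : Type*} [Fintype ι] [DecidableEq ι]

theorem univ_val_map_le_cons_of_agree_off {f g : ι → α} {t : ι} {c : α}
    (ht : g t = f t ∨ g t = c) (hoff : ∀ l, l ≠ t → g l = f l) :
    univ.val.map g ≤ c ::ₘ univ.val.map f := by
  have hsplit (h : ι → α) : univ.val.map h = h t ::ₘ (univ.erase t).val.map h := by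
    rw [← Multiset.map_cons, ← insert_val_of_notMem (notMem_erase t _), insert_erase (mem_univ t)]
  have hrest : (univ.erase t).val.map g = (univ.erase t).val.map f :=
    Multiset.map_congr rfl fun l hl => hoff l (ne_of_mem_erase hl)
  obtain ht | ht := ht
  · rw [hsplit g, hsplit f, ht, hrest]
    exact Multiset.le_cons_self _ _
  · rw [hsplit g, ht, hrest]
    exact Multiset.cons_le_cons _ <|
      Multiset.map_le_map (val_le_iff.2 (Finset.erase_subset t univ))

theorem univ_val_map_le_add_of_steps {n : ℕ} (v : ℕ → ι → α) (θ : ℕ → ι) (b : Fin n → α)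
    (hupd : ∀ m : Fin n, v (m + 1) (θ m) = v m (θ m) ∨ v (m + 1) (θ m) = b m)
    (hoth : ∀ m : Fin n, ∀ l, l ≠ θ m → v (m + 1) l = v m l) :
    univ.val.map (v n) ≤ univ.val.map (v 0) + univ.val.map b := by
  induction n with
  | zero => simp
  | succ n ih =>
    calc univ.val.map (v (n + 1))
        ≤ b (Fin.last n) ::ₘ univ.val.map (v n) :=
          univ_val_map_le_cons_of_agree_off (hupd (Fin.last n)) (hoth (Fin.last n))
      _ ≤ b (Fin.last n) ::ₘ (univ.val.map (v 0) + univ.val.map fun i : Fin n => b i.castSucc) :=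
          Multiset.cons_le_cons _ (ih _ (fun m => hupd m.castSucc) fun m => hoth m.castSucc)
      _ = univ.val.map (v 0) + univ.val.map b := by
          rw [Fin.univ_val_map_castSucc, Multiset.add_cons]

theorem final_values_submultiset_general
    (L M : ℕ)
    (a : Fin L → ℝ) (b : Fin M → ℝ)
    (v : ℕ → Fin L → ℝ) (θ : ℕ → Fin L)
    (hv0 : v 0 = a)
    (hupd : ∀ m : Fin M, v ((m : ℕ) + 1) (θ m) = max (v m (θ m)) (b m))
    (hoth : ∀ m : Fin M, ∀ l : Fin L, l ≠ θ m → v ((m : ℕ) + 1) l = v m l) :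
    Multiset.ofList (List.ofFn (v M)) ≤
        Multiset.ofList (List.ofFn a ++ List.ofFn b) ∧
      (Multiset.ofList (List.ofFn (v M))).card = L := by
  have hfinal := univ_val_map_le_add_of_steps v θ b
    (fun m => hupd m ▸ max_choice _ _) hoth
  rw [hv0] at hfinal
  simp only [Fin.univ_val_map, Multiset.coe_add] at hfinal
  exact ⟨hfinal, by simp⟩

/-- The multiset of final values of the selective-combining process is a
sub-multiset of `U = {a_1,…,a_L, b_1,…,b_M}` of cardinality `L`. -/
theorem final_values_submultiset
    (L M : ℕ) (hL : 0 < L) (hM : 0 < M)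
    (a : Fin L → ℝ) (b : Fin M → ℝ)
    (hdist : Function.Injective (Sum.elim a b))
    (v : ℕ → Fin L → ℝ) (θ : ℕ → Fin L)
    (hv0 : v 0 = a)
    (hmin : ∀ m : Fin M, ∀ l : Fin L, v m (θ m) ≤ v m l)
    (hupd : ∀ m : Fin M, v ((m : ℕ) + 1) (θ m) = max (v m (θ m)) (b m))
    (hoth : ∀ m : Fin M, ∀ l : Fin L, l ≠ θ m → v ((m : ℕ) + 1) l = v m l) :
    Multiset.ofList (List.ofFn (v M)) ≤
        Multiset.ofList (List.ofFn a ++ List.ofFn b) ∧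
      (Multiset.ofList (List.ofFn (v M))).card = L :=
  final_values_submultiset_general L M a b v θ hv0 hupd hoth
end

section
/- For every l with 1 ≤ l ≤ L, the l-th smallest value of the final vector is at least the (M+l)-th smallest element of U; that is, v'_l ≥ u'_{M+l}. Equivalently, for each final value there are at least M elements of U (counted with multiplicity) strictly smaller than it, one arising from each update step. -/
/-!
Fix a threshold `x` and count the coordinates of `v^(m)` lying below `x`. Entries never decrease,
so a step with `b_m < x` does not increase this count, while a step with `x ≤ b_m` lowers it by
one unless it is already zero: the minimal entry is then below `x` and is raised to at least `x`.
Hence at most `#{u ∈ U | u < x} - M` final entries lie below `x`. For `x` the `(M + l)`-th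
smallest element of `U` there are at most `M + l` elements of `U` below `x`, so at most `l` final
entries lie below `x`, i.e. the `l`-th smallest final entry is at least `x`.
-/

open Finset

namespace List.SortedLE

variable {α : Type*} [LinearOrder α] {s : List α}

theorem le_getElem_iff_countP_lt_le (hs : s.SortedLE) {i : ℕ} (hi : i < s.length) (x : α) :
    x ≤ s[i] ↔ s.countP (· < x) ≤ i := by
  constructor
  · intro hx
    have hdrop : (s.drop i).countP (· < x) = 0 := by
      simp only [countP_eq_zero, mem_drop_iff_getElem, decide_eq_true_eq, not_lt]
      rintro _ ⟨j, hj, rfl⟩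
      exact hx.trans (hs.getElem_le_getElem_of_le (by omega))
    calc s.countP (· < x) = (s.take i).countP (· < x) + (s.drop i).countP (· < x) := by
          rw [← countP_append, take_append_drop]
      _ ≤ (s.take i).length + 0 := Nat.add_le_add countP_le_length hdrop.le
      _ ≤ i := by simp
  · intro hcount
    by_contra! hx
    have htake : (s.take (i + 1)).countP (· < x) = i + 1 := by
      rw [countP_eq_length.2, length_take_of_le (by omega)]
      simp only [mem_take_iff_getElem, decide_eq_true_eq]
      rintro _ ⟨j, hj, rfl⟩
      exact (hs.getElem_le_getElem_of_le (by omega)).trans_lt hx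
    have := (take_sublist (i + 1) s).countP_le (p := (· < x))
    omega

end List.SortedLE

theorem List.countP_ofFn {α : Type*} {n : ℕ} (f : Fin n → α) (p : α → Prop) [DecidablePred p] :
    (List.ofFn f).countP (fun y => decide (p y)) = #{i | p (f i)} := by
  rw [← Multiset.coe_countP, ← Fin.univ_val_map, Multiset.countP_map]
  rfl

theorem card_lt_update_max_le {ι α : Type*} [Fintype ι] [DecidableEq ι] [LinearOrder α]
    {f : ι → α} {i : ι} (hi : ∀ j, f i ≤ f j) (c x : α) :
    #{j | Function.update f i (max (f i) c) j < x}
      ≤ #{j | f j < x} + (if c < x then 1 else 0) - 1 := by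
  set g := Function.update f i (max (f i) c)
  have hfg : ∀ j, f j ≤ g j := by
    intro j
    rcases eq_or_ne j i with rfl | hj
    · simp [g]
    · simp [g, hj]
  have hmono : ({j | g j < x} : Finset ι) ⊆ ({j | f j < x} : Finset ι) :=
    monotone_filter_right _ fun j _ => (hfg j).trans_lt
  split_ifs with hc
  · simpa using card_le_card hmono
  have hgi : x ≤ g i := by
    simp only [g, Function.update_self]
    exact le_max_of_le_right (not_lt.1 hc)
  by_cases hfi : f i < x
  · calc #{j | g j < x} ≤ #(({j | f j < x} : Finset ι).erase i) :=
          card_le_card fun j hj =>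
            mem_erase.2 ⟨by rintro rfl; exact hgi.not_gt (mem_filter.1 hj).2, hmono hj⟩
      _ = #{j | f j < x} + 0 - 1 := by rw [card_erase_of_mem (by simpa using hfi)]; rfl
  · have hempty : ({j | f j < x} : Finset ι) = ∅ :=
      filter_eq_empty_iff.2 fun j _ hj => hfi ((hi j).trans_lt hj)
    simpa [hempty] using card_le_card hmono

section SelectiveCombining

variable {α : Type*} [LinearOrder α] {L M : ℕ} {b : Fin M → α} {v : ℕ → Fin L → α}
  {θ : ℕ → Fin L}

theorem selectiveCombining_succ_eq_update
    (hupd : ∀ m : Fin M, v ((m : ℕ) + 1) (θ m) = max (v m (θ m)) (b m))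
    (hoth : ∀ m : Fin M, ∀ l : Fin L, l ≠ θ m → v ((m : ℕ) + 1) l = v m l) (m : Fin M) :
    v ((m : ℕ) + 1) = Function.update (v m) (θ m) (max (v m (θ m)) (b m)) := by
  funext l
  rcases eq_or_ne l (θ m) with rfl | hl
  · simp [hupd]
  · simp [hoth m l hl, hl]

theorem card_selectiveCombining_lt_le
    (hmin : ∀ m : Fin M, ∀ l : Fin L, v m (θ m) ≤ v m l)
    (hupd : ∀ m : Fin M, v ((m : ℕ) + 1) (θ m) = max (v m (θ m)) (b m))
    (hoth : ∀ m : Fin M, ∀ l : Fin L, l ≠ θ m → v ((m : ℕ) + 1) l = v m l) (x : α) :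
    ∀ m ≤ M, #{l | v m l < x} ≤ #{l | v 0 l < x} + ((List.ofFn b).take m).countP (· < x) - m
  | 0, _ => by simp
  | m + 1, hm => by
    let k : Fin M := ⟨m, hm⟩
    have hstep := card_lt_update_max_le (hmin k) (b k) x
    rw [← selectiveCombining_succ_eq_update hupd hoth k] at hstep
    simp only [k] at hstep
    have hcount : ((List.ofFn b).take (m + 1)).countP (· < x)
        = ((List.ofFn b).take m).countP (· < x) + if b k < x then 1 else 0 := by
      simp [List.take_add_one, show m < M from hm, k]
    have ih := card_selectiveCombining_lt_le hmin hupd hoth x m (by omega)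
    split_ifs at hstep hcount <;> omega

end SelectiveCombining

theorem sorted_final_values_ge_order_statistics_general
    (L M : ℕ)
    (a : Fin L → ℝ) (b : Fin M → ℝ)
    (v : ℕ → Fin L → ℝ) (θ : ℕ → Fin L)
    (hv0 : v 0 = a)
    (hmin : ∀ m : Fin M, ∀ l : Fin L, v m (θ m) ≤ v m l)
    (hupd : ∀ m : Fin M, v ((m : ℕ) + 1) (θ m) = max (v m (θ m)) (b m))
    (hoth : ∀ m : Fin M, ∀ l : Fin L, l ≠ θ m → v ((m : ℕ) + 1) l = v m l) :
    ∀ l : Fin L,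
      ((Multiset.ofList (List.ofFn a ++ List.ofFn b)).sort (· ≤ ·)).getD
          (M + l) 0 ≤
        ((Multiset.ofList (List.ofFn (v M))).sort (· ≤ ·)).getD l 0 := by
  intro l
  set sU := (Multiset.ofList (List.ofFn a ++ List.ofFn b)).sort (· ≤ ·)
  set sV := (Multiset.ofList (List.ofFn (v M))).sort (· ≤ ·)
  have hU : M + (l : ℕ) < sU.length := by
    simp only [sU, Multiset.length_sort, Multiset.coe_card, List.length_append, List.length_ofFn]
    omega
  have hV : (l : ℕ) < sV.length := by simp [sV]
  rw [List.getD_eq_getElem _ _ hU, List.getD_eq_getElem _ _ hV]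
  set x := sU[M + (l : ℕ)]
  have hcountU := ((Multiset.pairwise_sort _ _).sortedLE.le_getElem_iff_countP_lt_le hU x).1 le_rfl
  rw [(Multiset.pairwise_sort _ _).sortedLE.le_getElem_iff_countP_lt_le hV]
  rw [← Multiset.coe_countP, Multiset.sort_eq, Multiset.coe_countP] at hcountU ⊢
  rw [List.countP_append, List.countP_ofFn] at hcountU
  rw [List.countP_ofFn]
  have hfinal := card_selectiveCombining_lt_le hmin hupd hoth x M le_rfl
  rw [hv0, List.take_of_length_le (by simp)] at hfinal
  omega

/-- For every `l`, the `l`-th smallest value of the final vector of the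
selective-combining process is at least the `(M+l)`-th smallest element of
`U = {a_1,…,a_L, b_1,…,b_M}`. -/
theorem sorted_final_values_ge_order_statistics
    (L M : ℕ) (hL : 0 < L) (hM : 0 < M)
    (a : Fin L → ℝ) (b : Fin M → ℝ)
    (hdist : Function.Injective (Sum.elim a b))
    (v : ℕ → Fin L → ℝ) (θ : ℕ → Fin L)
    (hv0 : v 0 = a)
    (hmin : ∀ m : Fin M, ∀ l : Fin L, v m (θ m) ≤ v m l)
    (hupd : ∀ m : Fin M, v ((m : ℕ) + 1) (θ m) = max (v m (θ m)) (b m))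
    (hoth : ∀ m : Fin M, ∀ l : Fin L, l ≠ θ m → v ((m : ℕ) + 1) l = v m l) :
    ∀ l : Fin L,
      ((Multiset.ofList (List.ofFn a ++ List.ofFn b)).sort (· ≤ ·)).getD
          (M + l) 0 ≤
        ((Multiset.ofList (List.ofFn (v M))).sort (· ≤ ·)).getD l 0 :=
  sorted_final_values_ge_order_statistics_general L M a b v θ hv0 hmin hupd hoth
end

section
/- For every x > 0, P( XY/(X + Y + 1) > x ) = ∫_{x}^{∞} λ₂ e^{−λ₂ y} · exp( −λ₁ x (y + 1)/(y − x) ) dy. -/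
/-! Conditionally on `Y = y`, the event `XY/(X+Y+1) > x` is null for `y ≤ x`, since
`XY/(X+Y+1) ≤ Y` for nonnegative `X, Y`; for `y > x` it is the event `X > x(y+1)/(y-x)`, of
probability `exp(-λ₁ x(y+1)/(y-x))`. Integrating this against the density of `Y` gives the formula.
The CDF hypotheses identify the laws of `X` and `Y` with exponential distributions, and
independence makes the joint law their product. -/

open MeasureTheory ProbabilityTheory Set Real

namespace ProbabilityTheory

variable {r : ℝ}

lemma expMeasure_Iio_zero (r : ℝ) : expMeasure r (Iio 0) = 0 := by
  rw [expMeasure, gammaMeasure, withDensity_apply _ measurableSet_Iio]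
  exact setLIntegral_eq_zero measurableSet_Iio fun _ ha => gammaPDF_of_neg ha

lemma ae_nonneg_expMeasure (r : ℝ) : ∀ᵐ a ∂expMeasure r, 0 ≤ a := by
  rw [ae_iff]
  exact measure_mono_null (fun a ha => not_le.1 ha) (expMeasure_Iio_zero r)

lemma expMeasure_Iic (hr : 0 < r) (t : ℝ) :
    expMeasure r (Iic t) = ENNReal.ofReal (if 0 ≤ t then 1 - exp (-(r * t)) else 0) := by
  have := isProbabilityMeasure_expMeasure hr
  rw [← ofReal_cdf, cdf_expMeasure_eq hr]

lemma expMeasure_Ioi (hr : 0 < r) {c : ℝ} (hc : 0 ≤ c) :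
    expMeasure r (Ioi c) = ENNReal.ofReal (exp (-(r * c))) := by
  have := isProbabilityMeasure_expMeasure hr
  have hexp : exp (-(r * c)) ≤ 1 := exp_le_one_iff.2 (by nlinarith)
  rw [← compl_Iic, prob_compl_eq_one_sub measurableSet_Iic, expMeasure_Iic hr, if_pos hc,
    ← ENNReal.ofReal_one, ← ENNReal.ofReal_sub _ (by linarith), sub_sub_cancel]

lemma setLIntegral_expMeasure {s : Set ℝ} (hs : MeasurableSet s) (hs0 : s ⊆ Ici 0)
    {f : ℝ → ENNReal} (hf : Measurable f) :
    ∫⁻ y in s, f y ∂expMeasure r = ∫⁻ y in s, ENNReal.ofReal (r * exp (-(r * y))) * f y := by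
  rw [expMeasure, gammaMeasure, setLIntegral_withDensity_eq_setLIntegral_mul _
    (show Measurable (gammaPDF 1 r) from (measurable_gammaPDFReal 1 r).ennreal_ofReal) hf hs]
  refine setLIntegral_congr_fun hs fun y hy => ?_
  rw [Pi.mul_apply, ← exponentialPDF_of_nonneg (hs0 hy)]
  rfl

lemma map_eq_expMeasure_of_cdf {Ω : Type*} [MeasurableSpace Ω] {μ : Measure Ω}
    [IsFiniteMeasure μ] {X : Ω → ℝ} (hr : 0 < r) (hX : Measurable X)
    (hcdf : ∀ t, 0 ≤ t → μ {ω | X ω ≤ t} = ENNReal.ofReal (1 - exp (-r * t))) :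
    μ.map X = expMeasure r := by
  have := isProbabilityMeasure_expMeasure hr
  refine Measure.ext_of_Iic _ _ fun t => ?_
  rw [Measure.map_apply hX measurableSet_Iic, expMeasure_Iic hr]
  split_ifs with ht
  · rw [← neg_mul]
    exact hcdf t ht
  · have hnull : μ {ω | X ω ≤ 0} = 0 := by simpa using hcdf 0 le_rfl
    rw [ENNReal.ofReal_zero]
    exact measure_mono_null (fun ω (hω : X ω ≤ t) => (hω.trans (not_le.1 ht).le : X ω ≤ 0)) hnull

end ProbabilityTheory

noncomputable def afSnr (a b : ℝ) : ℝ := a * b / (a + b + 1)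

section afSnr

variable {a b x : ℝ}

lemma afSnr_le_right (ha : 0 ≤ a) (hb : 0 ≤ b) : afSnr a b ≤ b := by
  rw [afSnr, div_le_iff₀ (by linarith)]
  nlinarith

lemma lt_afSnr_iff (ha : 0 ≤ a) (hb : 0 ≤ b) (hxb : x < b) :
    x < afSnr a b ↔ x * (b + 1) / (b - x) < a := by
  rw [afSnr, lt_div_iff₀ (by linarith), div_lt_iff₀ (by linarith)]
  constructor <;> intro h <;> linarith

end afSnr

lemma measurableSet_lt_afSnr (x : ℝ) : MeasurableSet {p : ℝ × ℝ | x < afSnr p.1 p.2} :=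
  measurableSet_lt measurable_const (by unfold afSnr; fun_prop)

lemma expMeasure_lt_afSnr {r x b : ℝ} (hr : 0 < r) (hx : 0 ≤ x) (hb : 0 ≤ b) :
    expMeasure r {a | x < afSnr a b} =
      (Ioi x).indicator (fun b => ENNReal.ofReal (exp (-r * x * (b + 1) / (b - x)))) b := by
  by_cases hxb : x < b
  · have hslice : {a | x < afSnr a b} =ᵐ[expMeasure r] Ioi (x * (b + 1) / (b - x)) := by
      filter_upwards [ae_nonneg_expMeasure r] with a ha
      exact propext (lt_afSnr_iff ha hb hxb)
    rw [measure_congr hslice, expMeasure_Ioi hr (by have := sub_pos.2 hxb; positivity),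
      indicator_of_mem (mem_Ioi.2 hxb)]
    congr 2
    ring
  · rw [indicator_of_notMem (show b ∉ Ioi x from hxb)]
    refine measure_mono_null (fun a (ha : x < afSnr a b) => ?_) (expMeasure_Iio_zero r)
    by_contra ha0
    exact hxb (ha.trans_le (afSnr_le_right (not_lt.1 ha0) hb))

lemma expMeasure_prod_lt_afSnr {l1 l2 x : ℝ} (h1 : 0 < l1) (h2 : 0 < l2) (hx : 0 ≤ x) :
    (expMeasure l1).prod (expMeasure l2) {p | x < afSnr p.1 p.2} =
      ∫⁻ y in Ioi x,
        ENNReal.ofReal (l2 * exp (-l2 * y) * exp (-l1 * x * (y + 1) / (y - x))) := by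
  have hslice : ∀ᵐ y ∂expMeasure l2, expMeasure l1 {a | x < afSnr a y} =
      (Ioi x).indicator (fun y => ENNReal.ofReal (exp (-l1 * x * (y + 1) / (y - x)))) y := by
    filter_upwards [ae_nonneg_expMeasure l2] with y hy
    exact expMeasure_lt_afSnr h1 hx hy
  have := isProbabilityMeasure_expMeasure h1
  have := isProbabilityMeasure_expMeasure h2
  rw [Measure.prod_apply_symm (measurableSet_lt_afSnr x)]
  refine (lintegral_congr_ae hslice).trans ?_
  rw [lintegral_indicator measurableSet_Ioi,
    setLIntegral_expMeasure measurableSet_Ioi (Ioi_subset_Ici hx) (by fun_prop)]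
  refine setLIntegral_congr_fun measurableSet_Ioi fun y _ => ?_
  rw [← ENNReal.ofReal_mul (by positivity), neg_mul l2 y]

theorem ccdf_af_relayed_snr_general
    {Ω : Type*} [MeasurableSpace Ω] (μ : Measure Ω) [IsProbabilityMeasure μ]
    (l1 l2 : ℝ) (h1 : 0 < l1) (h2 : 0 < l2)
    (X Y : Ω → ℝ) (hX : Measurable X) (hY : Measurable Y)
    (hindep : IndepFun X Y μ)
    (hXcdf : ∀ t : ℝ, 0 ≤ t →
      μ {ω | X ω ≤ t} = ENNReal.ofReal (1 - Real.exp (-l1 * t)))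
    (hYcdf : ∀ t : ℝ, 0 ≤ t →
      μ {ω | Y ω ≤ t} = ENNReal.ofReal (1 - Real.exp (-l2 * t)))
    (x : ℝ) (hx : 0 < x) :
    (μ {ω | x < X ω * Y ω / (X ω + Y ω + 1)}).toReal =
      ∫ y in Set.Ioi x,
        l2 * Real.exp (-l2 * y) * Real.exp (-l1 * x * (y + 1) / (y - x)) := by
  have hjoint : μ.map (fun ω => (X ω, Y ω)) = (expMeasure l1).prod (expMeasure l2) := by
    rw [← map_eq_expMeasure_of_cdf h1 hX hXcdf, ← map_eq_expMeasure_of_cdf h2 hY hYcdf]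
    exact (indepFun_iff_map_prod_eq_prod_map_map hX.aemeasurable hY.aemeasurable).1 hindep
  calc (μ {ω | x < X ω * Y ω / (X ω + Y ω + 1)}).toReal
      = (μ.map (fun ω => (X ω, Y ω)) {p | x < afSnr p.1 p.2}).toReal := by
        rw [Measure.map_apply (hX.prodMk hY) (measurableSet_lt_afSnr x)]
        rfl
    _ = _ := by
        rw [hjoint, expMeasure_prod_lt_afSnr h1 h2 hx.le,
          integral_eq_lintegral_of_nonneg_ae (ae_of_all _ fun y => by positivity) (by fun_prop)]

/-- **CCDF of the AF relayed-link SNR.** If `X` and `Y` are independent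
exponential random variables with rates `l1` and `l2`, then for every
`x > 0`,
`P(XY/(X+Y+1) > x) = ∫_{x}^{∞} l2 e^{−l2 y} · exp(−l1 x (y+1)/(y−x)) dy`. -/
theorem ccdf_af_relayed_snr
    {Ω : Type*} [MeasurableSpace Ω] (μ : Measure Ω) [IsProbabilityMeasure μ]
    (l1 l2 : ℝ) (h1 : 0 < l1) (h2 : 0 < l2)
    (X Y : Ω → ℝ) (hX : Measurable X) (hY : Measurable Y)
    (hindep : IndepFun X Y μ)
    (hXneg : μ {ω | X ω < 0} = 0) (hYneg : μ {ω | Y ω < 0} = 0)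
    (hXcdf : ∀ t : ℝ, 0 ≤ t →
      μ {ω | X ω ≤ t} = ENNReal.ofReal (1 - Real.exp (-l1 * t)))
    (hYcdf : ∀ t : ℝ, 0 ≤ t →
      μ {ω | Y ω ≤ t} = ENNReal.ofReal (1 - Real.exp (-l2 * t)))
    (x : ℝ) (hx : 0 < x) :
    (μ {ω | x < X ω * Y ω / (X ω + Y ω + 1)}).toReal =
      ∫ y in Set.Ioi x,
        l2 * Real.exp (-l2 * y) * Real.exp (-l1 * x * (y + 1) / (y - x)) :=
  ccdf_af_relayed_snr_general μ l1 l2 h1 h2 X Y hX hY hindep hXcdf hYcdf x hx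
end

section
/- There exists a constant C > 0 (depending only on L, M, N, A) such that for all β ∈ (0, β₀], P( at least M+1 of the random variables X_1,…,X_{L+M} are ≤ β ) ≤ C · β^{M+N}. -/
open MeasureTheory ProbabilityTheory Finset

/-!
If at least `M + 1` of the `L + M` events `{X k ≤ β}` occur, then all events indexed by some
`(M + 1)`-subset `T` occur, so a union bound over these subsets and independence bound the
probability by a sum of products `∏ k ∈ T, P(X k ≤ β)`. Since only `M` indices are relayed,
every such `T` contains a direct index, contributing a factor `A β ^ N`; each of the other `M`
factors is at most `A β`, as `β ^ N ≤ β` for `β ≤ 1`. Hence every product is at most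
`A ^ (M + 1) β ^ (M + N)`, and there are `(L + M).choose (M + 1)` of them.
-/

theorem measureReal_setOf_le_ncard_le_sum_biInter {Ω ι : Type*} [MeasurableSpace Ω] [Fintype ι]
    (μ : Measure Ω) [IsFiniteMeasure μ] (E : ι → Set Ω) (m : ℕ) :
    μ.real {ω | m ≤ {k | ω ∈ E k}.ncard} ≤
      ∑ T ∈ univ.powersetCard m, μ.real (⋂ k ∈ T, E k) := by
  classical
  refine (measureReal_mono (fun ω hω => ?_) (measure_ne_top μ _)).trans
    (measureReal_biUnion_finset_le _ _)
  have hcard : m ≤ #{k | ω ∈ E k} := by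
    rwa [Set.mem_ofPred_eq, Set.ncard_eq_toFinset_card', Set.toFinset_ofPred] at hω
  obtain ⟨T, hTsub, hTcard⟩ := exists_subset_card_eq hcard
  exact Set.mem_biUnion (mem_powersetCard.2 ⟨subset_univ T, hTcard⟩)
    (Set.mem_iInter₂.2 fun k hk => (mem_filter.1 (hTsub hk)).2)

theorem Fin.exists_mem_val_lt_of_lt_card {L M : ℕ} {T : Finset (Fin (L + M))} (hT : M < #T) :
    ∃ k ∈ T, (k : ℕ) < L := by
  by_contra! h
  have hle : #T ≤ #(range M) :=
    card_le_card_of_injOn (fun k => (k : ℕ) - L)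
      (fun k hk => by have := h k hk; simp only [coe_range, Set.mem_Iio]; omega)
      (fun a ha b hb hab => by have := h a ha; have := h b hb; simp only at hab; omega)
  rw [card_range] at hle
  omega

theorem Finset.prod_le_mul_pow_card_sub_one {ι R : Type*} [CommSemiring R] [PartialOrder R]
    [IsOrderedRing R] [DecidableEq ι] {T : Finset ι} {p : ι → R} {a b : R} {i : ι} (hi : i ∈ T) (hp : ∀ k ∈ T, 0 ≤ p k)
    (ha : ∀ k ∈ T, p k ≤ a) (hb : p i ≤ b) :
    ∏ k ∈ T, p k ≤ b * a ^ (#T - 1) := by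
  rw [← mul_prod_erase T p hi, ← card_erase_of_mem hi, ← prod_const]
  have hp' : ∀ k ∈ T.erase i, 0 ≤ p k := fun k hk => hp k (mem_of_mem_erase hk)
  exact mul_le_mul hb (prod_le_prod hp' fun k hk => ha k (mem_of_mem_erase hk))
    (prod_nonneg hp') ((hp i hi).trans hb)

theorem ProbabilityTheory.iIndepFun.measureReal_biInter_preimage {Ω ι κ : Type*}
    [MeasurableSpace Ω] [MeasurableSpace κ] {μ : Measure Ω} [IsFiniteMeasure μ]
    {X : ι → Ω → κ} (hX : iIndepFun X μ) (T : Finset ι) {s : Set κ} (hs : MeasurableSet s) :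
    μ.real (⋂ k ∈ T, X k ⁻¹' s) = ∏ k ∈ T, μ.real (X k ⁻¹' s) := by
  rw [measureReal_def, hX.meas_biInter fun k _ => ⟨s, hs, rfl⟩, ENNReal.toReal_prod]
  rfl

theorem outage_upper_bound_general
    {Ω : Type*} [MeasurableSpace Ω] (μ : Measure Ω) [IsProbabilityMeasure μ]
    (L M N : ℕ) (hN : 0 < N)
    (X : Fin (L + M) → Ω → ℝ)
    (hindep : iIndepFun X μ)
    (A β₀ : ℝ) (hA : 1 ≤ A) (hβ₀ : β₀ ∈ Set.Ioc (0 : ℝ) 1)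
    (hdir : ∀ k : Fin (L + M), (k : ℕ) < L → ∀ β ∈ Set.Ioc (0 : ℝ) β₀,
      (μ {ω | X k ω ≤ β}).toReal ≤ A * β ^ N)
    (hrel : ∀ k : Fin (L + M), L ≤ (k : ℕ) → ∀ β ∈ Set.Ioc (0 : ℝ) β₀,
      (μ {ω | X k ω ≤ β}).toReal ≤ A * β) :
    ∃ C : ℝ, 0 < C ∧ ∀ β ∈ Set.Ioc (0 : ℝ) β₀,
      (μ {ω | M + 1 ≤ {k : Fin (L + M) | X k ω ≤ β}.ncard}).toReal ≤
        C * β ^ (M + N) := by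
  refine ⟨((L + M).choose (M + 1) + 1) * A ^ (M + 1), by positivity, fun β hβ => ?_⟩
  have hβ0 : 0 ≤ β := hβ.1.le
  have hβ1 : β ≤ 1 := hβ.2.trans hβ₀.2
  have hall : ∀ k, μ.real {ω | X k ω ≤ β} ≤ A * β := fun k => by
    rcases lt_or_ge (k : ℕ) L with hk | hk
    · exact (hdir k hk β hβ).trans (by gcongr; exact pow_le_of_le_one hβ0 hβ1 hN.ne')
    · exact hrel k hk β hβ
  have hT : ∀ T ∈ univ.powersetCard (M + 1),
      μ.real (⋂ k ∈ T, {ω | X k ω ≤ β}) ≤ A ^ (M + 1) * β ^ (M + N) := fun T hT => by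
    obtain ⟨-, hTcard⟩ := mem_powersetCard.1 hT
    obtain ⟨i, hi, hiL⟩ := Fin.exists_mem_val_lt_of_lt_card (T := T) (by omega)
    calc μ.real (⋂ k ∈ T, {ω | X k ω ≤ β})
        = ∏ k ∈ T, μ.real {ω | X k ω ≤ β} :=
          hindep.measureReal_biInter_preimage T measurableSet_Iic
      _ ≤ A * β ^ N * (A * β) ^ (#T - 1) :=
          prod_le_mul_pow_card_sub_one hi (fun k _ => measureReal_nonneg) (fun k _ => hall k)
            (hdir i hiL β hβ)
      _ = A ^ (M + 1) * β ^ (M + N) := by rw [hTcard, Nat.add_sub_cancel]; ring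
  calc μ.real {ω | M + 1 ≤ {k | X k ω ≤ β}.ncard}
      ≤ ∑ T ∈ univ.powersetCard (M + 1), μ.real (⋂ k ∈ T, {ω | X k ω ≤ β}) :=
        measureReal_setOf_le_ncard_le_sum_biInter μ (fun k => {ω | X k ω ≤ β}) (M + 1)
    _ ≤ (L + M).choose (M + 1) * (A ^ (M + 1) * β ^ (M + N)) := by
        simpa using sum_le_sum hT
    _ ≤ ((L + M).choose (M + 1) + 1) * A ^ (M + 1) * β ^ (M + N) := by
        rw [← mul_assoc]; gcongr; linarith

/-- **Upper bound yielding diversity order `M + N`.** Let `X 1,…,X (L+M)` be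
mutually independent, with `P(X k ≤ β) ≤ A β^N` for the first `L` of them and
`P(X k ≤ β) ≤ A β` for the last `M` of them, for all `β ∈ (0, β₀]`. Then
there is `C > 0` with `P(at least M+1 of the X k are ≤ β) ≤ C β^(M+N)` for
all `β ∈ (0, β₀]`. -/
theorem outage_upper_bound
    {Ω : Type*} [MeasurableSpace Ω] (μ : Measure Ω) [IsProbabilityMeasure μ]
    (L M N : ℕ) (hL : 0 < L) (hM : 0 < M) (hN : 0 < N)
    (X : Fin (L + M) → Ω → ℝ) (hmeas : ∀ k, Measurable (X k))
    (hindep : iIndepFun X μ)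
    (A β₀ : ℝ) (hA : 1 ≤ A) (hβ₀ : β₀ ∈ Set.Ioc (0 : ℝ) 1)
    (hdir : ∀ k : Fin (L + M), (k : ℕ) < L → ∀ β ∈ Set.Ioc (0 : ℝ) β₀,
      (μ {ω | X k ω ≤ β}).toReal ≤ A * β ^ N)
    (hrel : ∀ k : Fin (L + M), L ≤ (k : ℕ) → ∀ β ∈ Set.Ioc (0 : ℝ) β₀,
      (μ {ω | X k ω ≤ β}).toReal ≤ A * β) :
    ∃ C : ℝ, 0 < C ∧ ∀ β ∈ Set.Ioc (0 : ℝ) β₀,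
      (μ {ω | M + 1 ≤ {k : Fin (L + M) | X k ω ≤ β}.ncard}).toReal ≤
        C * β ^ (M + N) :=
  outage_upper_bound_general μ L M N hN X hindep A β₀ hA hβ₀ hdir hrel
end

section
/- There exists a constant c' > 0 (depending only on L, M, N, c) such that for all β ∈ (0, β₀], P( at least M+1 of the random variables X_1,…,X_{L+M} are ≤ β ) ≥ c' · β^{M+N}. -/
/-!
Taking the first direct link together with all `M` relay links gives `M + 1` variables
which, by independence, are simultaneously `≤ β` with probability at least
`c β^N · (c β)^M = c^(M+1) β^(M+N)`; on that event at least `M + 1` variables are `≤ β`.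
-/

open MeasureTheory ProbabilityTheory

section

variable {ι Ω : Type*}

lemma biInter_subset_setOf_card_le_ncard [Finite ι] (p : ι → Ω → Prop) (S : Finset ι) :
    (⋂ k ∈ S, {ω | p k ω}) ⊆ {ω | S.card ≤ {k | p k ω}.ncard} := by
  intro ω hω
  simp only [Set.mem_iInter, Set.mem_ofPred_eq] at hω ⊢
  rw [← Set.ncard_coe_finset]
  exact Set.ncard_le_ncard hω (Set.toFinite _)

lemma ProbabilityTheory.iIndepFun.measure_biInter_le_eq_prod [MeasurableSpace Ω]
    {μ : Measure Ω} {X : ι → Ω → ℝ} (hX : iIndepFun X μ) (S : Finset ι) (β : ℝ) :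
    μ (⋂ k ∈ S, {ω | X k ω ≤ β}) = ∏ k ∈ S, μ {ω | X k ω ≤ β} :=
  hX.meas_biInter fun _ _ => ⟨Set.Iic β, measurableSet_Iic, rfl⟩

lemma ProbabilityTheory.iIndepFun.prod_le_measure_card_le_ncard [Finite ι] [MeasurableSpace Ω]
    {μ : Measure Ω} [IsFiniteMeasure μ] {X : ι → Ω → ℝ} (hX : iIndepFun X μ) (S : Finset ι)
    (β : ℝ) :
    ∏ k ∈ S, (μ {ω | X k ω ≤ β}).toReal ≤
      (μ {ω | S.card ≤ {k | X k ω ≤ β}.ncard}).toReal := by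
  rw [← ENNReal.toReal_prod, ← hX.measure_biInter_le_eq_prod]
  exact ENNReal.toReal_mono (measure_ne_top μ _)
    (measure_mono (biInter_subset_setOf_card_le_ncard (fun k ω => X k ω ≤ β) S))

end

theorem outage_lower_bound_general
    {Ω : Type*} [MeasurableSpace Ω] (μ : Measure Ω) [IsProbabilityMeasure μ]
    (L M N : ℕ) (hL : 0 < L)
    (X : Fin (L + M) → Ω → ℝ)
    (hindep : iIndepFun X μ)
    (c β₀ : ℝ) (hc : 0 < c)
    (hdir : ∀ k : Fin (L + M), (k : ℕ) < L → ∀ β ∈ Set.Ioc (0 : ℝ) β₀,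
      c * β ^ N ≤ (μ {ω | X k ω ≤ β}).toReal)
    (hrel : ∀ k : Fin (L + M), L ≤ (k : ℕ) → ∀ β ∈ Set.Ioc (0 : ℝ) β₀,
      c * β ≤ (μ {ω | X k ω ≤ β}).toReal) :
    ∃ c' : ℝ, 0 < c' ∧ ∀ β ∈ Set.Ioc (0 : ℝ) β₀,
      c' * β ^ (M + N) ≤
        (μ {ω | M + 1 ≤ {k : Fin (L + M) | X k ω ≤ β}.ncard}).toReal := by
  refine ⟨c ^ (M + 1), pow_pos hc _, fun β hβ => ?_⟩
  have hcβ : 0 ≤ c * β := (mul_pos hc hβ.1).le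
  let direct : Fin (L + M) := Fin.castAdd M ⟨0, hL⟩
  let relays : Finset (Fin (L + M)) := Finset.univ.map (Fin.natAddEmb L)
  have hdirect : direct ∉ relays := by simp [direct, relays, Fin.ext_iff, hL.ne']
  have hcard : (insert direct relays).card = M + 1 := by
    simp [relays, Finset.card_insert_of_notMem hdirect]
  have hrelays : (c * β) ^ M ≤ ∏ k ∈ relays, (μ {ω | X k ω ≤ β}).toReal := by
    simpa [relays] using Finset.prod_le_prod (s := Finset.univ)
      (fun _ _ => hcβ) fun j _ => hrel (Fin.natAdd L j) (by simp) β hβ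
  calc c ^ (M + 1) * β ^ (M + N) = c * β ^ N * (c * β) ^ M := by ring
    _ ≤ ∏ k ∈ insert direct relays, (μ {ω | X k ω ≤ β}).toReal := by
      rw [Finset.prod_insert hdirect]
      exact mul_le_mul (hdir direct hL β hβ) hrelays
        (pow_nonneg hcβ M) ENNReal.toReal_nonneg
    _ ≤ _ := hcard ▸ hindep.prod_le_measure_card_le_ncard _ β

/-- **Matching lower bound for the diversity order `M + N`.** Let
`X 1,…,X (L+M)` be mutually independent, with `P(X k ≤ β) ≥ c β^N` for the
first `L` of them and `P(X k ≤ β) ≥ c β` for the last `M` of them, and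
`P(X k ≤ β) ≤ 1/2` for all of them, for all `β ∈ (0, β₀]`. Then there is
`c' > 0` with `P(at least M+1 of the X k are ≤ β) ≥ c' β^(M+N)` for all
`β ∈ (0, β₀]`. -/
theorem outage_lower_bound
    {Ω : Type*} [MeasurableSpace Ω] (μ : Measure Ω) [IsProbabilityMeasure μ]
    (L M N : ℕ) (hL : 0 < L) (hM : 0 < M) (hN : 0 < N)
    (X : Fin (L + M) → Ω → ℝ) (hmeas : ∀ k, Measurable (X k))
    (hindep : iIndepFun X μ)
    (c β₀ : ℝ) (hc : 0 < c) (hβ₀ : β₀ ∈ Set.Ioc (0 : ℝ) 1)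
    (hdir : ∀ k : Fin (L + M), (k : ℕ) < L → ∀ β ∈ Set.Ioc (0 : ℝ) β₀,
      c * β ^ N ≤ (μ {ω | X k ω ≤ β}).toReal)
    (hrel : ∀ k : Fin (L + M), L ≤ (k : ℕ) → ∀ β ∈ Set.Ioc (0 : ℝ) β₀,
      c * β ≤ (μ {ω | X k ω ≤ β}).toReal)
    (hhalf : ∀ k : Fin (L + M), ∀ β ∈ Set.Ioc (0 : ℝ) β₀,
      (μ {ω | X k ω ≤ β}).toReal ≤ 1 / 2) :
    ∃ c' : ℝ, 0 < c' ∧ ∀ β ∈ Set.Ioc (0 : ℝ) β₀,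
      c' * β ^ (M + N) ≤
        (μ {ω | M + 1 ≤ {k : Fin (L + M) | X k ω ≤ β}.ncard}).toReal :=
  outage_lower_bound_general μ L M N hL X hindep c β₀ hc hdir hrel
end
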